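/- arXiv:1505.03335 — 2 statements merged into one kernel-verified Lean document; each statement's English description precedes it below -/
import Mathlib

section
/- For 1 < α < 2 and for integers ℓ ≥ 4 and 2 ≤ m ≤ ⌊ℓ/2⌋ - 1, one has ϖ_m ϖ_{ℓ-m} ≥ ϖ_{m+1} ϖ_{ℓ-m-1}, where ϖ_k = (-1)^k binom(α, k); consequently ϖ_m ϖ_{ℓ-m} ≤ ϖ₂ ϖ_{ℓ-2} for all 2 ≤ m ≤ ⌊ℓ/2⌋. -/
open Finset

/-- Generalized binomial coefficient `binom α ℓ = α(α-1)⋯(α-ℓ+1)/ℓ!`. -/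
noncomputable def gbinom (α : ℝ) (ℓ : ℕ) : ℝ :=
  (∏ j ∈ Finset.range ℓ, (α - j)) / (Nat.factorial ℓ)

/-- Grünwald–Letnikov coefficients `ϖ_ℓ = (-1)^ℓ binom(α, ℓ)`. -/
noncomputable def glCoeff (α : ℝ) (ℓ : ℕ) : ℝ := (-1) ^ ℓ * gbinom α ℓ

/-!
The ratio `ϖ_{k+1} / ϖ_k = 1 - (1 + α) / (k + 1)` increases with `k`, and the coefficients
are nonnegative from `k = 2` on. Hence for `m ≤ n` the exchange `ϖ_{m+1} ϖ_n ≤ ϖ_m ϖ_{n+1}`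
holds, so `m ↦ ϖ_m ϖ_{ℓ-m}` decreases while `m ≤ ℓ - m` and is largest at `m = 2`.
-/

theorem glCoeff_succ (α : ℝ) (k : ℕ) :
    glCoeff α (k + 1) = (1 - (1 + α) / (k + 1)) * glCoeff α k := by
  have hk : (k : ℝ) + 1 ≠ 0 := by positivity
  simp only [glCoeff, gbinom, prod_range_succ, Nat.factorial_succ, pow_succ, Nat.cast_mul,
    Nat.cast_add, Nat.cast_one]
  field_simp
  ring

theorem glCoeff_nonneg {α : ℝ} (h1 : 1 ≤ α) (h2 : α ≤ 2) {k : ℕ} (hk : 2 ≤ k) :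
    0 ≤ glCoeff α k := by
  induction k, hk using Nat.le_induction with
  | base =>
    norm_num [glCoeff, gbinom, prod_range_succ]
    nlinarith
  | succ n hn ih =>
    have hn' : (2 : ℝ) ≤ n := by exact_mod_cast hn
    rw [glCoeff_succ]
    refine mul_nonneg ?_ ih
    rw [sub_nonneg, div_le_one (by positivity)]
    linarith

theorem glCoeff_succ_mul_le {α : ℝ} (h1 : 1 ≤ α) (h2 : α ≤ 2) {m n : ℕ}
    (hm : 2 ≤ m) (hmn : m ≤ n) :
    glCoeff α (m + 1) * glCoeff α n ≤ glCoeff α m * glCoeff α (n + 1) := by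
  have hprod : 0 ≤ glCoeff α m * glCoeff α n :=
    mul_nonneg (glCoeff_nonneg h1 h2 hm) (glCoeff_nonneg h1 h2 (hm.trans hmn))
  have hratio : (1 + α) / (n + 1) ≤ (1 + α) / (m + 1) := by gcongr
  calc glCoeff α (m + 1) * glCoeff α n
      = (1 - (1 + α) / (m + 1)) * (glCoeff α m * glCoeff α n) := by rw [glCoeff_succ]; ring
    _ ≤ (1 - (1 + α) / (n + 1)) * (glCoeff α m * glCoeff α n) := by gcongr
    _ = glCoeff α m * glCoeff α (n + 1) := by rw [glCoeff_succ]; ring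

theorem glCoeff_mul_glCoeff_sub_antitone {α : ℝ} (h1 : 1 ≤ α) (h2 : α ≤ 2) {ℓ i j : ℕ}
    (hi : 2 ≤ i) (hij : i ≤ j) (hj : 2 * j ≤ ℓ) :
    glCoeff α j * glCoeff α (ℓ - j) ≤ glCoeff α i * glCoeff α (ℓ - i) := by
  induction j, hij using Nat.le_induction with
  | base => exact le_rfl
  | succ j hij ih =>
    have hstep := glCoeff_succ_mul_le h1 h2 (hi.trans hij) (n := ℓ - j - 1) (by omega)
    rw [show ℓ - j - 1 + 1 = ℓ - j by omega, Nat.sub_sub] at hstep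
    exact hstep.trans (ih (by omega))

theorem glCoeff_product_monotone (α : ℝ) (h1 : 1 < α) (h2 : α < 2) :
    (∀ ℓ m : ℕ, 4 ≤ ℓ → 2 ≤ m → m ≤ ℓ / 2 - 1 →
      glCoeff α (m + 1) * glCoeff α (ℓ - m - 1) ≤ glCoeff α m * glCoeff α (ℓ - m)) ∧
    (∀ ℓ m : ℕ, 4 ≤ ℓ → 2 ≤ m → m ≤ ℓ / 2 →
      glCoeff α m * glCoeff α (ℓ - m) ≤ glCoeff α 2 * glCoeff α (ℓ - 2)) := by
  refine ⟨fun ℓ m _ hm hmℓ => ?_, fun ℓ m _ hm hmℓ =>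
    glCoeff_mul_glCoeff_sub_antitone h1.le h2.le le_rfl hm (by omega)⟩
  have hstep := glCoeff_succ_mul_le h1.le h2.le hm (n := ℓ - m - 1) (by omega)
  rwa [show ℓ - m - 1 + 1 = ℓ - m by omega] at hstep
end

section
/- Define κ_ℓ = ((3α-2)/(2α))^α Σ_{m=0}^{ℓ} ((α-2)/(3α-2))^m ϖ_m ϖ_{ℓ-m}, where ϖ_k = (-1)^k binom(α, k) and 1 < α < 2. Then the κ_ℓ satisfy the recurrence: κ₀ = ((3α-2)/(2α))^α, κ₁ = (4α(1-α)/(3α-2)) κ₀, and for ℓ ≥ 2, ℓ(3α-2) κ_ℓ = 4(1-α)(α-ℓ+1) κ_{ℓ-1} + (α-2)(2α-ℓ+2) κ_{ℓ-2}. -/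
open Finset Real

/-- The 2nd-order coefficients
`κ_ℓ = ((3α-2)/(2α))^α Σ_{m=0}^{ℓ} ((α-2)/(3α-2))^m ϖ_m ϖ_{ℓ-m}`. -/
noncomputable def kappa (α : ℝ) (ℓ : ℕ) : ℝ :=
  ((3 * α - 2) / (2 * α)) ^ α *
    ∑ m ∈ Finset.range (ℓ + 1),
      ((α - 2) / (3 * α - 2)) ^ m * glCoeff α m * glCoeff α (ℓ - m)

/-!
Up to the factor `κ₀`, `κ_ℓ` is the coefficient of `z^ℓ` in `f(z) = (1 - r z)^α (1 - z)^α` with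
`r = (α - 2)/(3α - 2)`. Logarithmic differentiation gives
`(1 - r z)(1 - z) f' = -α (1 + r - 2 r z) f`, and comparing coefficients of `z^{ℓ-1}` is the
recurrence. Formally, for a product of two binomial series we split `ℓ = i + j` along the
antidiagonal and shift the weights `i` and `j` separately, using `(k + 1) ϖ_{k+1} = (k - α) ϖ_k`.
-/

theorem glCoeff_zero (α : ℝ) : glCoeff α 0 = 1 := by
  simp [glCoeff, gbinom]

theorem glCoeff_one (α : ℝ) : glCoeff α 1 = -α := by
  simp [glCoeff, gbinom]

theorem succ_mul_glCoeff_succ (α : ℝ) (k : ℕ) :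
    ((k : ℝ) + 1) * glCoeff α (k + 1) = ((k : ℝ) - α) * glCoeff α k := by
  have hk : (k.factorial : ℝ) ≠ 0 := by positivity
  rw [glCoeff, glCoeff, gbinom, gbinom, prod_range_succ, Nat.factorial_succ]
  push_cast
  field_simp
  ring

section Convolution

variable (α β r : ℝ)

noncomputable def glConvTerm (p : ℕ × ℕ) : ℝ :=
  r ^ p.1 * glCoeff α p.1 * glCoeff β p.2

/-- The coefficient of `z^ℓ` in `(1 - r z)^α (1 - z)^β`. -/
noncomputable def glConv (ℓ : ℕ) : ℝ :=
  ∑ m ∈ range (ℓ + 1), r ^ m * glCoeff α m * glCoeff β (ℓ - m)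

theorem glConv_eq_sum_antidiagonal (ℓ : ℕ) :
    glConv α β r ℓ = ∑ p ∈ antidiagonal ℓ, glConvTerm α β r p :=
  (Nat.sum_antidiagonal_eq_sum_range_succ_mk (glConvTerm α β r) ℓ).symm

theorem glConv_zero : glConv α β r 0 = 1 := by
  simp [glConv, glCoeff_zero]

theorem glConv_one : glConv α β r 1 = -(α * r + β) := by
  simp only [glConv, sum_range_succ, range_zero, sum_empty, Nat.sub_zero, Nat.sub_self,
    glCoeff_zero, glCoeff_one]
  ring

theorem natCast_mul_glConv (ℓ : ℕ) :
    (ℓ : ℝ) * glConv α β r ℓ =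
      ∑ p ∈ antidiagonal ℓ, (p.1 : ℝ) * glConvTerm α β r p +
        ∑ p ∈ antidiagonal ℓ, (p.2 : ℝ) * glConvTerm α β r p := by
  rw [glConv_eq_sum_antidiagonal, mul_sum, ← sum_add_distrib]
  refine sum_congr rfl fun p hp => ?_
  rw [← mem_antidiagonal.mp hp]
  push_cast
  ring

theorem sum_fst_mul_glConvTerm_succ (n : ℕ) :
    ∑ p ∈ antidiagonal (n + 1), (p.1 : ℝ) * glConvTerm α β r p =
      r * (∑ p ∈ antidiagonal n, (p.1 : ℝ) * glConvTerm α β r p - α * glConv α β r n) := by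
  rw [glConv_eq_sum_antidiagonal, mul_sum, ← sum_sub_distrib, mul_sum, Nat.sum_antidiagonal_succ,
    Nat.cast_zero, zero_mul, zero_add]
  refine sum_congr rfl fun p _ => ?_
  simp only [glConvTerm]
  push_cast
  linear_combination (r ^ (p.1 + 1) * glCoeff β p.2) * succ_mul_glCoeff_succ α p.1

theorem sum_snd_mul_glConvTerm_succ (n : ℕ) :
    ∑ p ∈ antidiagonal (n + 1), (p.2 : ℝ) * glConvTerm α β r p =
      ∑ p ∈ antidiagonal n, (p.2 : ℝ) * glConvTerm α β r p - β * glConv α β r n := by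
  rw [glConv_eq_sum_antidiagonal, mul_sum, ← sum_sub_distrib, Nat.sum_antidiagonal_succ',
    Nat.cast_zero, zero_mul, zero_add]
  refine sum_congr rfl fun p _ => ?_
  simp only [glConvTerm]
  push_cast
  linear_combination (r ^ p.1 * glCoeff α p.1) * succ_mul_glCoeff_succ β p.2

theorem glConv_recurrence (n : ℕ) :
    ((n : ℝ) + 2) * glConv α β r (n + 2) =
      ((1 + r) * ((n : ℝ) + 1) - (α * r + β)) * glConv α β r (n + 1) +
        r * (α + β - n) * glConv α β r n := by
  have hc₂ := natCast_mul_glConv α β r (n + 2)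
  have hc₁ := natCast_mul_glConv α β r (n + 1)
  have hc₀ := natCast_mul_glConv α β r n
  have hU₁ := sum_fst_mul_glConvTerm_succ α β r (n + 1)
  have hU₀ := sum_fst_mul_glConvTerm_succ α β r n
  have hV₁ := sum_snd_mul_glConvTerm_succ α β r (n + 1)
  have hV₀ := sum_snd_mul_glConvTerm_succ α β r n
  push_cast at hc₂ hc₁
  linear_combination hc₂ + hU₁ + hV₁ - (1 + r) * hc₁ - hU₀ - r * hV₀ + r * hc₀

end Convolution

theorem kappa_recurrence_general (α : ℝ) (h1 : 1 < α) :
    kappa α 0 = ((3 * α - 2) / (2 * α)) ^ α ∧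
    kappa α 1 = (4 * α * (1 - α) / (3 * α - 2)) * kappa α 0 ∧
    ∀ ℓ : ℕ, 2 ≤ ℓ →
      (ℓ : ℝ) * (3 * α - 2) * kappa α ℓ =
        4 * (1 - α) * (α - ℓ + 1) * kappa α (ℓ - 1) +
          (α - 2) * (2 * α - ℓ + 2) * kappa α (ℓ - 2) := by
  have h3 : 3 * α - 2 ≠ 0 := by linarith
  set c := ((3 * α - 2) / (2 * α)) ^ α
  set r := (α - 2) / (3 * α - 2)
  have hκ : ∀ ℓ, kappa α ℓ = c * glConv α α r ℓ := fun _ => rfl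
  have hr : (3 * α - 2) * r = α - 2 := mul_div_cancel₀ _ h3
  refine ⟨by rw [hκ, glConv_zero, mul_one], ?_, fun ℓ hℓ => ?_⟩
  · have h1r : -(α * r + α) = 4 * α * (1 - α) / (3 * α - 2) := by
      rw [eq_div_iff h3]
      linear_combination (-α) * hr
    rw [hκ, hκ, glConv_zero, glConv_one, ← h1r]
    ring
  · obtain ⟨n, rfl⟩ := Nat.exists_eq_add_of_le' hℓ
    rw [show n + 2 - 1 = n + 1 by omega, Nat.add_sub_cancel, hκ, hκ, hκ]
    push_cast
    linear_combination c * (3 * α - 2) * glConv_recurrence α α r n +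
      c * (((n : ℝ) + 1 - α) * glConv α α r (n + 1) + (2 * α - n) * glConv α α r n) * hr

theorem kappa_recurrence (α : ℝ) (h1 : 1 < α) (h2 : α < 2) :
    kappa α 0 = ((3 * α - 2) / (2 * α)) ^ α ∧
    kappa α 1 = (4 * α * (1 - α) / (3 * α - 2)) * kappa α 0 ∧
    ∀ ℓ : ℕ, 2 ≤ ℓ →
      (ℓ : ℝ) * (3 * α - 2) * kappa α ℓ =
        4 * (1 - α) * (α - ℓ + 1) * kappa α (ℓ - 1) +
          (α - 2) * (2 * α - ℓ + 2) * kappa α (ℓ - 2) :=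
  kappa_recurrence_general α h1
end
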